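/- arXiv:1608.01402 — 3 statements merged into one kernel-verified Lean document; each statement's English description precedes it below -/
import Mathlib

section
/- In ConvexRel, the cap relation η_A : I → A ⊗ A defined by {(*,(a,a)) | a ∈ A} is a convex relation, and together with its converse cup ε_A : A ⊗ A → I it satisfies the snake (triangle/yanking) equations: (ε_A × 1_A) ∘ (1_A × η_A) = 1_A and (1_A × ε_A) ∘ (η_A × 1_A) = 1_A (up to the unit isomorphisms), making every object of ConvexRel self-dual. -/
/-- A finitely supported formal convex combination (finite probability distribution). -/
def IsDist {A : Type*} (f : A →₀ ℝ) : Prop :=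
  (∀ a, 0 ≤ f a) ∧ f.sum (fun _ p => p) = 1

/-- A convex algebra: a set with a mixing operation satisfying the unit and flattening laws. -/
structure ConvexAlg (A : Type*) where
  mix : (A →₀ ℝ) → A
  mix_pure : ∀ a : A, mix (Finsupp.single a 1) = a
  mix_flatten : ∀ d : (A →₀ ℝ) →₀ ℝ, IsDist d → (∀ μ ∈ d.support, IsDist μ) →
    mix (d.sum fun μ p => p • μ) = mix (d.sum fun μ p => Finsupp.single (mix μ) p)

/-- The convex combination ∑ᵢ pᵢ aᵢ computed in a convex algebra. -/
noncomputable def ConvexAlg.mixFam {A : Type*} (c : ConvexAlg A) {n : ℕ}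
    (p : Fin n → ℝ) (a : Fin n → A) : A :=
  c.mix (∑ i, Finsupp.single (a i) (p i))

/-- A convex relation between convex algebras: closed under componentwise convex combinations. -/
def IsConvexRel {A B : Type*} (α : ConvexAlg A) (β : ConvexAlg B) (R : A → B → Prop) : Prop :=
  ∀ (n : ℕ) (p : Fin n → ℝ) (a : Fin n → A) (b : Fin n → B),
    (∀ i, 0 ≤ p i) → (∑ i, p i) = 1 → (∀ i, R (a i) (b i)) →
    R (α.mixFam p a) (β.mixFam p b)

/-- A convex subset: closed under finite convex combinations. -/
def IsConvexSubset {A : Type*} (α : ConvexAlg A) (S : Set A) : Prop :=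
  ∀ (n : ℕ) (p : Fin n → ℝ) (a : Fin n → A),
    (∀ i, 0 ≤ p i) → (∑ i, p i) = 1 → (∀ i, a i ∈ S) → α.mixFam p a ∈ S

/-- Relational composition. -/
def relComp {A B C : Type*} (R : A → B → Prop) (S : B → C → Prop) : A → C → Prop :=
  fun a c => ∃ b, R a b ∧ S b c

lemma isDist_sum_single {B : Type*} {n : ℕ} (p : Fin n → ℝ) (b : Fin n → B)
    (hp : ∀ i, 0 ≤ p i) (hs : (∑ i, p i) = 1) :
    IsDist (∑ i, Finsupp.single (b i) (p i)) := by
  constructor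
  · intro x
    rw [Finsupp.finset_sum_apply]
    apply Finset.sum_nonneg
    intro i _
    classical
    rw [Finsupp.single_apply]
    split <;> simp [hp i]
  · have := Finsupp.sum_finset_sum_index (s := Finset.univ)
      (g := fun i : Fin n => Finsupp.single (b i) (p i)) (h := fun (_ : B) (q : ℝ) => q)
      (fun _ => rfl) (fun _ _ _ => rfl)
    rw [← this]
    simpa using hs

/-- the cap η_A = {(*,(a,a)) | a ∈ A} is a convex relation, and together with
its converse cup it satisfies the two snake (yanking) equations (up to unit/associativity
isomorphisms), making every object of ConvexRel self-dual.  The composites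
(ε_A ⊗ 1_A) ∘ (1_A ⊗ η_A) and (1_A ⊗ ε_A) ∘ (η_A ⊗ 1_A) are written out explicitly as
relational composites. -/
theorem cap_cup_snake {A : Type*} (ι : ConvexAlg PUnit) (α : ConvexAlg A)
    (γ : ConvexAlg (A × A))
    (hγ : ∀ d : (A × A) →₀ ℝ, IsDist d →
      γ.mix d = (α.mix (d.mapDomain Prod.fst), α.mix (d.mapDomain Prod.snd))) :
    IsConvexRel ι γ (fun _ x => x.1 = x.2) ∧
    (∀ a a' : A,
      (∃ x : A × A × A, (x.1 = a ∧ x.2.1 = x.2.2) ∧ (x.1 = x.2.1 ∧ x.2.2 = a')) ↔ a = a') ∧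
    (∀ a a' : A,
      (∃ x : A × A × A, (x.1 = x.2.1 ∧ x.2.2 = a) ∧ (x.2.1 = x.2.2 ∧ x.1 = a')) ↔ a = a') := by
  refine ⟨?_, ?_, ?_⟩
  · intro n p a b hp hs hR
    have hd := isDist_sum_single p b hp hs
    show (γ.mixFam p b).1 = (γ.mixFam p b).2
    unfold ConvexAlg.mixFam
    rw [hγ _ hd]
    have : Finsupp.mapDomain Prod.fst (∑ i, Finsupp.single (b i) (p i)) =
        Finsupp.mapDomain Prod.snd (∑ i, Finsupp.single (b i) (p i)) := by
      rw [Finsupp.mapDomain_finset_sum, Finsupp.mapDomain_finset_sum]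
      simp only [Finsupp.mapDomain_single]
      exact Finset.sum_congr rfl fun i _ => by rw [hR i]
    rw [this]
  · intro a a'
    constructor
    · rintro ⟨x, ⟨h1, h2⟩, h3, h4⟩
      rw [← h4, ← h2, ← h3, h1]
    · rintro rfl
      exact ⟨⟨a, a, a⟩, ⟨rfl, rfl⟩, rfl, rfl⟩
  · intro a a'
    constructor
    · rintro ⟨x, ⟨h1, h2⟩, h3, h4⟩
      rw [← h4, h1, h3, h2]
    · rintro rfl
      exact ⟨⟨a, a, a⟩, ⟨rfl, rfl⟩, rfl, rfl⟩
end

section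
/- For any convex algebra (A,α), the diagonal copy relation Δ = {(a,(a,a)) | a ∈ A} : A → A ⊗ A and the delete relation ι = {(a,*) | a ∈ A} : A → I are convex relations, and (A, Δ, ι, Δ†, ι†) forms a commutative special Frobenius structure: Δ is coassociative and cocommutative with counit ι, Δ† ∘ Δ = 1_A (speciality), and the Frobenius law (1 ⊗ Δ†)∘(Δ ⊗ 1) = Δ ∘ Δ† = (Δ† ⊗ 1)∘(1 ⊗ Δ) holds. -/
lemma dist_of_sum {A : Type*} {n : ℕ} (p : Fin n → ℝ) (a : Fin n → A)
    (hp : ∀ i, 0 ≤ p i) (hs : (∑ i, p i) = 1) :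
    IsDist (∑ i, Finsupp.single (a i) (p i)) := by
  classical
  constructor
  · intro b
    rw [Finsupp.finset_sum_apply]
    exact Finset.sum_nonneg fun i _ => by
      rw [Finsupp.single_apply]; split <;> simp [hp i]
  · rw [← Finsupp.sum_finset_sum_index (h := fun (_ : A) (q : ℝ) => q)
      (fun _ => rfl) (fun _ _ _ => rfl)]
    simp only [Finsupp.sum_single_index]
    exact hs

lemma mapDomain_sum_single {A B : Type*} {n : ℕ} (f : A → B) (p : Fin n → ℝ) (a : Fin n → A) :
    Finsupp.mapDomain f (∑ i, Finsupp.single (a i) (p i))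
      = ∑ i, Finsupp.single (f (a i)) (p i) := by
  rw [Finsupp.mapDomain_finset_sum]
  simp [Finsupp.mapDomain_single]

/-- for any convex algebra (A,α), the copy relation Δ = {(a,(a,a))} and delete
relation ι = {(a,*)} are convex relations forming a commutative special dagger Frobenius
structure: Δ is cocommutative and coassociative with counit, Δ† ∘ Δ = 1 (speciality), and
the Frobenius laws (1 ⊗ Δ†)∘(Δ ⊗ 1) = Δ ∘ Δ† = (Δ† ⊗ 1)∘(1 ⊗ Δ) hold (composites written
out explicitly, up to associativity/unit isomorphisms). -/
theorem copy_delete_frobenius {A : Type*} (unitAlg : ConvexAlg PUnit) (α : ConvexAlg A)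
    (γ : ConvexAlg (A × A))
    (hγ : ∀ d : (A × A) →₀ ℝ, IsDist d →
      γ.mix d = (α.mix (d.mapDomain Prod.fst), α.mix (d.mapDomain Prod.snd))) :
    -- copy and delete are convex relations
    IsConvexRel α γ (fun a x => x = (a, a)) ∧
    IsConvexRel α unitAlg (fun _ _ => True) ∧
    -- coassociativity: (1 ⊗ Δ) ∘ Δ = (Δ ⊗ 1) ∘ Δ
    (∀ (a : A) (x : A × A × A),
      (∃ b : A × A, b = (a, a) ∧ (x.1 = b.1 ∧ x.2 = (b.2, b.2))) ↔
      (∃ b : A × A, b = (a, a) ∧ ((x.1, x.2.1) = (b.1, b.1) ∧ x.2.2 = b.2))) ∧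
    -- cocommutativity: swap ∘ Δ = Δ
    (∀ (a : A) (x : A × A),
      (∃ b : A × A, b = (a, a) ∧ x = (b.2, b.1)) ↔ x = (a, a)) ∧
    -- counit law: (ι ⊗ 1) ∘ Δ = 1
    (∀ a a' : A, (∃ b : A × A, b = (a, a) ∧ (True ∧ b.2 = a')) ↔ a = a') ∧
    -- speciality: Δ† ∘ Δ = 1
    (∀ a a' : A, (∃ b : A × A, b = (a, a) ∧ b = (a', a')) ↔ a = a') ∧
    -- Frobenius law: (1 ⊗ Δ†) ∘ (Δ ⊗ 1) = Δ ∘ Δ†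
    (∀ x y : A × A,
      (∃ z : A × A × A, ((z.1, z.2.1) = (x.1, x.1) ∧ z.2.2 = x.2) ∧
        (y.1 = z.1 ∧ z.2 = (y.2, y.2))) ↔
      (∃ b : A, x = (b, b) ∧ y = (b, b))) ∧
    -- Frobenius law: (Δ† ⊗ 1) ∘ (1 ⊗ Δ) = Δ ∘ Δ†
    (∀ x y : A × A,
      (∃ z : A × A × A, (z.1 = x.1 ∧ z.2 = (x.2, x.2)) ∧
        ((z.1 = y.1 ∧ z.2.1 = y.1) ∧ z.2.2 = y.2)) ↔
      (∃ b : A, x = (b, b) ∧ y = (b, b))) := by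
  refine ⟨?_, ?_, ?_, ?_, ?_, ?_, ?_, ?_⟩
  · intro n p a b hp hs hr
    have hb : b = fun i => (a i, a i) := funext fun i => hr i
    subst hb
    unfold ConvexAlg.mixFam
    rw [hγ _ (dist_of_sum p _ hp hs), mapDomain_sum_single, mapDomain_sum_single]
  · intro n p a b hp hs hr; trivial
  · intro a x
    constructor
    · rintro ⟨b, rfl, h1, h2⟩
      exact ⟨(a, a), rfl, by simp_all [Prod.ext_iff], by simp_all [Prod.ext_iff]⟩
    · rintro ⟨b, rfl, h1, h2⟩
      exact ⟨(a, a), rfl, by simp_all [Prod.ext_iff], by simp_all [Prod.ext_iff]⟩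
  · intro a x
    constructor
    · rintro ⟨b, rfl, rfl⟩; rfl
    · rintro rfl; exact ⟨(a, a), rfl, rfl⟩
  · intro a a'
    constructor
    · rintro ⟨b, rfl, -, rfl⟩; rfl
    · rintro rfl; exact ⟨(a, a), rfl, trivial, rfl⟩
  · intro a a'
    constructor
    · rintro ⟨b, rfl, h⟩; exact (Prod.ext_iff.mp h).1
    · rintro rfl; exact ⟨(a, a), rfl, rfl⟩
  · intro x y
    constructor
    · rintro ⟨⟨z1, z2, z3⟩, ⟨h1, h2⟩, h3, h4⟩
      simp_all [Prod.ext_iff]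
    · rintro ⟨b, rfl, rfl⟩
      exact ⟨(b, b, b), ⟨rfl, rfl⟩, rfl, rfl⟩
  · intro x y
    constructor
    · rintro ⟨⟨z1, z2, z3⟩, ⟨h1, h2⟩, ⟨h3, h4⟩, h5⟩
      simp_all [Prod.ext_iff]
    · rintro ⟨b, rfl, rfl⟩
      exact ⟨(b, b, b), ⟨rfl, rfl⟩, ⟨rfl, rfl⟩, rfl⟩
end

section
/- A relation R between the underlying sets of two affine join semilattices L and M (each with their induced convex algebra structure) is a convex relation if and only if whenever R(aᵢ, bᵢ) holds for a finite nonempty family, then R(⋁ᵢ aᵢ, ⋁ᵢ bᵢ); in particular it suffices that R is closed under binary joins: R(a,b) ∧ R(a',b') ⟹ R(a ⋁ a', b ⋁ b'). -/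
open Finset

section

variable {ι : Type*}

lemma Finset.filter_pos_nonempty_of_sum_pos {M : Type*} [AddCommMonoid M] [LinearOrder M]
    [IsOrderedCancelAddMonoid M] {s : Finset ι} {p : ι → M} (hsum : 0 < ∑ i ∈ s, p i) :
    (s.filter (0 < p ·)).Nonempty := by
  obtain ⟨i, hi, hpos⟩ :=
    exists_lt_of_sum_lt (s := s) (f := fun _ => 0) (g := p) (by rwa [sum_const_zero])
  exact ⟨i, mem_filter.2 ⟨hi, hpos⟩⟩

lemma Finsupp.mem_support_sum_single_iff {α : Type*} {s : Finset ι} {p : ι → ℝ}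
    (hp : ∀ i ∈ s, 0 ≤ p i) (a : ι → α) (x : α) :
    x ∈ (∑ i ∈ s, Finsupp.single (a i) (p i)).support ↔ ∃ i ∈ s, 0 < p i ∧ a i = x := by
  classical
  have hx : (∑ i ∈ s, Finsupp.single (a i) (p i)) x = ∑ i ∈ s with a i = x, p i := by
    simp [Finsupp.finsetSum_apply, Finsupp.single_apply, Finset.sum_filter]
  rw [Finsupp.mem_support_iff, hx, ne_eq,
    sum_eq_zero_iff_of_nonneg fun i hi => hp i (mem_filter.1 hi).1]
  push Not
  simp only [mem_filter]
  constructor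
  · rintro ⟨i, ⟨hi, rfl⟩, hne⟩
    exact ⟨i, hi, (hp i hi).lt_of_ne' hne, rfl⟩
  · rintro ⟨i, hi, hpos, rfl⟩
    exact ⟨i, ⟨hi, rfl⟩, hpos.ne'⟩

lemma isDist_sum_single_s19 {α : Type*} [Fintype ι] {p : ι → ℝ} (hp : ∀ i, 0 ≤ p i)
    (hsum : ∑ i, p i = 1) (a : ι → α) : IsDist (∑ i, Finsupp.single (a i) (p i)) := by
  refine ⟨fun x => ?_, ?_⟩
  · rw [Finsupp.finsetSum_apply]
    exact sum_nonneg fun i _ => Finsupp.single_nonneg.2 (hp i) x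
  · rw [← Finsupp.sum_finsetSum_index (fun _ => rfl) (fun _ _ _ => rfl)]
    simpa using hsum

end

lemma Finset.rel_sup'_sup' {ι L M : Type*} [SemilatticeSup L] [SemilatticeSup M]
    {R : L → M → Prop} (hR : ∀ a b a' b', R a b → R a' b' → R (a ⊔ a') (b ⊔ b'))
    {s : Finset ι} (hs : s.Nonempty) {a : ι → L} {b : ι → M} (h : ∀ i ∈ s, R (a i) (b i)) :
    R (s.sup' hs a) (s.sup' hs b) := by
  have key := sup'_induction hs (fun i => (a i, b i)) (p := fun x => R x.1 x.2)
    (fun x hx y hy => hR _ _ _ _ hx hy) h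
  rwa [apply_sup'_eq_sup'_comp hs Prod.fst (fun _ _ => rfl),
    apply_sup'_eq_sup'_comp hs Prod.snd (fun _ _ => rfl)] at key

def ConvexAlg.IsAffineJoin {L : Type*} [SemilatticeSup L] (c : ConvexAlg L) : Prop :=
  ∀ d : L →₀ ℝ, IsDist d → ∀ h : d.support.Nonempty, c.mix d = d.support.sup' h id

lemma ConvexAlg.IsAffineJoin.mixFam_eq_sup' {L : Type*} [SemilatticeSup L] {c : ConvexAlg L}
    (hc : c.IsAffineJoin) {n : ℕ} {p : Fin n → ℝ} (hp : ∀ i, 0 ≤ p i) (hsum : ∑ i, p i = 1)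
    (a : Fin n → L) :
    c.mixFam p a = (univ.filter (0 < p ·)).sup'
      (filter_pos_nonempty_of_sum_pos (hsum ▸ one_pos)) a := by
  have hmem := Finsupp.mem_support_sum_single_iff (s := univ) (fun i _ => hp i) a
  have hne : (∑ i, Finsupp.single (a i) (p i)).support.Nonempty := by
    obtain ⟨i, hi⟩ := filter_pos_nonempty_of_sum_pos (s := univ) (hsum ▸ one_pos)
    exact ⟨a i, (hmem _).2 ⟨i, mem_univ i, (mem_filter.1 hi).2, rfl⟩⟩
  rw [ConvexAlg.mixFam, hc _ (isDist_sum_single_s19 hp hsum a) hne]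
  refine le_antisymm (sup'_le _ _ fun x hx => ?_) (sup'_le _ _ fun i hi => ?_)
  · obtain ⟨i, -, hpos, rfl⟩ := (hmem x).1 hx
    exact le_sup' a (mem_filter.2 ⟨mem_univ i, hpos⟩)
  · exact le_sup' id ((hmem _).2 ⟨i, mem_univ i, (mem_filter.1 hi).2, rfl⟩)

section

variable {L M : Type*} [SemilatticeSup L] [SemilatticeSup M] {cL : ConvexAlg L} {cM : ConvexAlg M}
  {R : L → M → Prop}

lemma IsConvexRel.of_sup_closed (hL : cL.IsAffineJoin) (hM : cM.IsAffineJoin)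
    (hR : ∀ a b a' b', R a b → R a' b' → R (a ⊔ a') (b ⊔ b')) : IsConvexRel cL cM R := by
  intro n p a b hp hsum hab
  rw [hL.mixFam_eq_sup' hp hsum, hM.mixFam_eq_sup' hp hsum]
  exact rel_sup'_sup' hR _ fun i _ => hab i

lemma IsConvexRel.rel_sup'_univ (hL : cL.IsAffineJoin) (hM : cM.IsAffineJoin)
    (hconv : IsConvexRel cL cM R) {n : ℕ} {a : Fin (n + 1) → L} {b : Fin (n + 1) → M}
    (hab : ∀ i, R (a i) (b i)) : R (univ.sup' univ_nonempty a) (univ.sup' univ_nonempty b) := by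
  have hw : 0 < ((n : ℝ) + 1)⁻¹ := by positivity
  have hsum : ∑ _ : Fin (n + 1), ((n : ℝ) + 1)⁻¹ = 1 := by simp; field_simp
  have key := hconv _ _ a b (fun _ => hw.le) hsum hab
  rw [hL.mixFam_eq_sup' (fun _ => hw.le) hsum, hM.mixFam_eq_sup' (fun _ => hw.le) hsum] at key
  simpa [hw] using key

end

/-- a relation between the convex algebras induced by two affine join
semilattices is convex iff it is closed under joins of finite nonempty families; in
particular closure under binary joins suffices. -/
theorem semilattice_convexRel_iff {L M : Type*} [SemilatticeSup L] [SemilatticeSup M]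
    (cL : ConvexAlg L) (cM : ConvexAlg M)
    (hL : ∀ d : L →₀ ℝ, IsDist d → ∀ h : d.support.Nonempty, cL.mix d = d.support.sup' h id)
    (hM : ∀ d : M →₀ ℝ, IsDist d → ∀ h : d.support.Nonempty, cM.mix d = d.support.sup' h id)
    (R : L → M → Prop) :
    (IsConvexRel cL cM R ↔
      ∀ (n : ℕ) (a : Fin (n + 1) → L) (b : Fin (n + 1) → M),
        (∀ i, R (a i) (b i)) →
        R (Finset.univ.sup' Finset.univ_nonempty a) (Finset.univ.sup' Finset.univ_nonempty b)) ∧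
    ((∀ a b a' b', R a b → R a' b' → R (a ⊔ a') (b ⊔ b')) → IsConvexRel cL cM R) := by
  have convex_of_sup_closed := IsConvexRel.of_sup_closed (R := R) hL hM
  refine ⟨⟨fun hconv n a b hab => hconv.rel_sup'_univ hL hM hab, fun hfin => ?_⟩,
    convex_of_sup_closed⟩
  refine convex_of_sup_closed fun a b a' b' h h' => ?_
  simpa [Fin.univ_succ] using hfin 1 ![a, a'] ![b, b'] (Fin.forall_fin_two.2 ⟨h, h'⟩)
end
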